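/- (Theorem 1, forward direction trivially and backward direction substantively.) In the composed transition system of an MPI program with only synchronous sends, source-specific receives, and barriers, for every execution in the full state graph G from the initial global state σ₀ to a deadlocked global state σ, there is an execution of the same length from σ₀ to σ in the on-the-fly reduced graph G̃ (which keeps from each state only the transition of minimal weight); and conversely. -/

import Mathlib

/-- Local actions of an MPI process: synchronous send to a destination,
receive from a specific source, or barrier. -/
inductive MAct (n : ℕ) where
  | send (dest : Fin n)
  | recv (src : Fin n)
  | barrier
deriving DecidableEq

/-- Global actions of the parallel composition: `B` (barrier synchronizing all
processes) and `SR i j` (matched synchronous send from process `i` to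
process `j`). -/
inductive GAct (n : ℕ) where
  | B
  | SR (i j : Fin n)
deriving DecidableEq

variable {n : ℕ} {L : Fin n → Type}

/-- A global action is enabled in the global state `σ` (an `n`-tuple of local
states): `B` iff every process's unique next local action is `barrier`;
`SR i j` iff `i ≠ j`, process `i`'s next action is a send to `j` and process
`j`'s next action is a receive from `i`. Here `next i` gives the unique next
local action of deterministic process `i` (`none` = terminated). -/
def GEnabled (next : ∀ i, L i → Option (MAct n)) (σ : ∀ i, L i) : GAct n → Prop
  | .B => ∀ i, next i (σ i) = some .barrier
  | .SR i j => i ≠ j ∧ next i (σ i) = some (.send j) ∧ next j (σ j) = some (.recv i)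

open scoped Classical in
/-- The global step function: `B` advances all components (via the local
advance functions `adv`), `SR i j` advances exactly components `i` and `j`. -/
noncomputable def gstep (next : ∀ i, L i → Option (MAct n)) (adv : ∀ i, L i → L i) :
    GAct n → (∀ i, L i) → Option (∀ i, L i)
  | .B, σ => if GEnabled next σ .B then some (fun k => adv k (σ k)) else none
  | .SR i j, σ =>
      if GEnabled next σ (.SR i j) then
        some (Function.update (Function.update σ i (adv i (σ i))) j (adv j (σ j)))
      else none

/-- The weight of a global action: `B` gets the least weight, and an `SR`
action gets a weight determined by the smaller index of the two processes
it advances (the designated scheduled process). -/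
def weight : GAct n → ℕ
  | .B => 1
  | .SR i j => 2 + min i.val j.val

/-- Executions in the full state graph `G`, labeled by their action lists. -/
inductive GRun (next : ∀ i, L i → Option (MAct n)) (adv : ∀ i, L i → L i) :
    List (GAct n) → (∀ i, L i) → (∀ i, L i) → Prop
  | nil (σ : ∀ i, L i) : GRun next adv [] σ σ
  | cons {g : GAct n} {l : List (GAct n)} {σ σ' τ : ∀ i, L i} :
      gstep next adv g σ = some σ' → GRun next adv l σ' τ → GRun next adv (g :: l) σ τ

/-- Executions in the on-the-fly reduced graph `G̃`, which keeps from each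
state only the transition whose action has minimal weight among the enabled
actions. -/
inductive RRun (next : ∀ i, L i → Option (MAct n)) (adv : ∀ i, L i → L i) :
    List (GAct n) → (∀ i, L i) → (∀ i, L i) → Prop
  | nil (σ : ∀ i, L i) : RRun next adv [] σ σ
  | cons {g : GAct n} {l : List (GAct n)} {σ σ' τ : ∀ i, L i} :
      (∀ g' : GAct n, GEnabled next σ g' → weight g ≤ weight g') →
      gstep next adv g σ = some σ' → RRun next adv l σ' τ → RRun next adv (g :: l) σ τ

/-- A deadlocked global state: no global action is enabled, but at least one
process has not terminated. -/
def Deadlocked (next : ∀ i, L i → Option (MAct n)) (σ : ∀ i, L i) : Prop :=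
  (∀ g : GAct n, ¬ GEnabled next σ g) ∧ ∃ i : Fin n, (next i (σ i)).isSome

/-! Two distinct actions enabled in the same state are both `SR` actions on disjoint pairs of
processes (a barrier is never co-enabled with anything), so they commute and neither disables the
other. Hence the minimal-weight action `g₀` enabled at `σ₀` stays enabled along any execution that
avoids it; since nothing is enabled at the deadlock, every execution from `σ₀` to it fires `g₀`,
and firing `g₀` first instead gives an execution of the same length. Induction on the length
finishes the proof. -/

section Independence

variable {next : ∀ i, L i → Option (MAct n)} {adv : ∀ i, L i → L i} {σ : ∀ i, L i}

theorem GEnabled.of_gstep_eq_some {g : GAct n} {σ' : ∀ i, L i}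
    (h : gstep next adv g σ = some σ') : GEnabled next σ g := by
  cases g <;> simp only [gstep] at h <;> split at h <;> simp_all

theorem gstep_SR_of_enabled {i j : Fin n} (h : GEnabled next σ (.SR i j)) :
    gstep next adv (.SR i j) σ =
      some (Function.update (Function.update σ i (adv i (σ i))) j (adv j (σ j))) := by
  simp only [gstep, if_pos h]

theorem GEnabled.eq_B_of_B {g : GAct n} (hB : GEnabled next σ .B) (hg : GEnabled next σ g) :
    g = .B := by
  cases g with
  | B => rfl
  | SR i j => simpa [hB i] using hg.2.1

theorem GEnabled.SR_disjoint {i j a b : Fin n} (hij : GEnabled next σ (.SR i j))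
    (hab : GEnabled next σ (.SR a b)) (hne : GAct.SR a b ≠ .SR i j) :
    a ≠ i ∧ a ≠ j ∧ b ≠ i ∧ b ≠ j := by
  obtain ⟨-, hi, hj⟩ := hij
  obtain ⟨-, ha, hb⟩ := hab
  refine ⟨?_, ?_, ?_, ?_⟩ <;> rintro rfl <;> simp_all

theorem GEnabled.SR_update_of_disjoint {i j a b : Fin n} (hij : GEnabled next σ (.SR i j))
    (hd : a ≠ i ∧ a ≠ j ∧ b ≠ i ∧ b ≠ j) (x : L a) (y : L b) :
    GEnabled next (Function.update (Function.update σ a x) b y) (.SR i j) := by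
  obtain ⟨hai, haj, hbi, hbj⟩ := hd
  simpa [GEnabled, Function.update_apply, hai.symm, haj.symm, hbi.symm, hbj.symm] using hij

theorem gstep_diamond {g g' : GAct n} {σ₁ : ∀ i, L i} (hg' : GEnabled next σ g')
    (hne : g ≠ g') (hstep : gstep next adv g σ = some σ₁) :
    ∃ σ' σ₂, gstep next adv g' σ = some σ' ∧ gstep next adv g σ' = some σ₂ ∧
      gstep next adv g' σ₁ = some σ₂ := by
  have hg := GEnabled.of_gstep_eq_some hstep
  cases g with
  | B => exact absurd (hg.eq_B_of_B hg').symm hne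
  | SR a b =>
  cases g' with
  | B => exact absurd (hg'.eq_B_of_B hg) hne
  | SR i j =>
  obtain ⟨hai, haj, hbi, hbj⟩ := hg'.SR_disjoint hg hne
  have hia := hai.symm; have hib := hbi.symm; have hja := haj.symm; have hjb := hbj.symm
  rw [gstep_SR_of_enabled hg] at hstep
  cases hstep
  refine ⟨_, _, gstep_SR_of_enabled hg',
    gstep_SR_of_enabled (hg.SR_update_of_disjoint ⟨hia, hib, hja, hjb⟩ _ _),
    (gstep_SR_of_enabled (hg'.SR_update_of_disjoint ⟨hai, haj, hbi, hbj⟩ _ _)).trans ?_⟩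
  congr 1
  simp (disch := assumption) only [Function.update_of_ne]
  rw [Function.update_comm hbi, Function.update_comm hai, Function.update_comm hbj,
    Function.update_comm haj]

end Independence

section Runs

variable {next : ∀ i, L i → Option (MAct n)} {adv : ∀ i, L i → L i}

theorem RRun.toGRun {l : List (GAct n)} {σ τ : ∀ i, L i} (h : RRun next adv l σ τ) :
    GRun next adv l σ τ := by
  induction h with
  | nil σ => exact .nil σ
  | cons _ hstep _ ih => exact .cons hstep ih

theorem GRun.exists_perm_cons {l : List (GAct n)} {σ τ : ∀ i, L i} {g₀ : GAct n}
    (hrun : GRun next adv l σ τ) (hen : GEnabled next σ g₀) (hτ : ¬ GEnabled next τ g₀) :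
    ∃ l' σ', l.Perm (g₀ :: l') ∧ gstep next adv g₀ σ = some σ' ∧ GRun next adv l' σ' τ := by
  induction hrun with
  | nil => exact absurd hen hτ
  | @cons g rest σ σ₁ τ hstep hrest ih =>
    by_cases hg : g = g₀
    · subst hg
      exact ⟨rest, σ₁, .refl _, hstep, hrest⟩
    obtain ⟨σ', σ₂, hσ', hσ₂, hσ₁⟩ := gstep_diamond hen hg hstep
    obtain ⟨l', σ'', hperm, hσ'', hrun'⟩ := ih (.of_gstep_eq_some hσ₁) hτ
    obtain rfl : σ'' = σ₂ := Option.some_inj.mp (hσ''.symm.trans hσ₁)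
    exact ⟨g :: l', σ', (hperm.cons g).trans (.swap g₀ g l'), hσ', .cons hσ₂ hrun'⟩

theorem exists_min_weight_enabled {σ : ∀ i, L i} {g : GAct n} (hg : GEnabled next σ g) :
    ∃ g₀, GEnabled next σ g₀ ∧ ∀ g', GEnabled next σ g' → weight g₀ ≤ weight g' := by
  obtain ⟨g₀, hg₀, hmin⟩ := (measure (weight (n := n))).wf.has_min {g | GEnabled next σ g} ⟨g, hg⟩
  exact ⟨g₀, hg₀, fun g' hg' => not_lt.mp (hmin g' hg')⟩

theorem GRun.exists_rrun_of_deadlocked {l : List (GAct n)} {σ₀ σ : ∀ i, L i}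
    (hrun : GRun next adv l σ₀ σ) (hdead : Deadlocked next σ) :
    ∃ l', l'.length = l.length ∧ RRun next adv l' σ₀ σ := by
  induction hlen : l.length generalizing l σ₀ with
  | zero =>
    obtain rfl := List.length_eq_zero_iff.mp hlen
    cases hrun
    exact ⟨[], rfl, .nil _⟩
  | succ k ih =>
    obtain ⟨g, hg⟩ : ∃ g, GEnabled next σ₀ g := by
      cases hrun with
      | nil => simp at hlen
      | cons hstep _ => exact ⟨_, .of_gstep_eq_some hstep⟩
    obtain ⟨g₀, hg₀, hmin⟩ := exists_min_weight_enabled hg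
    obtain ⟨l', σ', hperm, hσ', hrun'⟩ := hrun.exists_perm_cons hg₀ (hdead.1 g₀)
    obtain ⟨l'', hlen', hred⟩ := ih hrun' (by simpa [hlen] using hperm.length_eq.symm)
    exact ⟨g₀ :: l'', by simp [hlen'], .cons hmin hσ' hred⟩

end Runs

theorem stmt12_general (next : ∀ i, L i → Option (MAct n)) (adv : ∀ i, L i → L i)
    (σ0 σ : ∀ i, L i) (hdead : Deadlocked next σ) (l : List (GAct n)) :
    (GRun next adv l σ0 σ →
      ∃ l' : List (GAct n), l'.length = l.length ∧ RRun next adv l' σ0 σ) ∧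
    (RRun next adv l σ0 σ → GRun next adv l σ0 σ) :=
  ⟨fun h => h.exists_rrun_of_deadlocked hdead, RRun.toGRun⟩

/-- Theorem 1: in the composed transition system of an MPI
program with synchronous sends, source-specific receives and barriers (with an
acyclic state graph), for every execution in the full state graph from `σ₀` to
a deadlocked state `σ` there is an execution of the same length from `σ₀` to
`σ` in the on-the-fly reduced graph, and conversely every reduced execution is
an execution of the full graph. -/
theorem stmt12 (next : ∀ i, L i → Option (MAct n)) (adv : ∀ i, L i → L i)
    (hacyc : ∀ (σ : ∀ i, L i) (l : List (GAct n)), l ≠ [] → GRun next adv l σ σ → False)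
    (σ0 σ : ∀ i, L i) (hdead : Deadlocked next σ) (l : List (GAct n)) :
    (GRun next adv l σ0 σ →
      ∃ l' : List (GAct n), l'.length = l.length ∧ RRun next adv l' σ0 σ) ∧
    (RRun next adv l σ0 σ → GRun next adv l σ0 σ) :=
  stmt12_general next adv σ0 σ hdead l
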